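/- arXiv:1312.5861 — 2 statements merged into one kernel-verified Lean document; each statement's English description precedes it below -/
import Mathlib

section
/- Material derivative of the unit normal: let Γ = φ⁻¹(0) be a compact C² hypersurface in ℝ^d with unit normal n = ∇φ/|∇φ|, let V ∈ C_c²(ℝ^d;ℝ^d) satisfy V = (V·n)n on Γ, and for small t let n_t = ∇φ_t/|∇φ_t| with φ_t = φ∘T_t^{-1} be the unit normal of the transported hypersurface Γ_t = T_t(Γ). Then for every x ∈ Γ, the material derivative of the normal satisfies d/dt n_t(T_t(x)) |_{t=0} = −∇_Γ(V·n)(x), where ∇_Γ is the tangential gradient on Γ. -/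
/-!
Write `A = DV(x)` and `w = ∇φ(x)`. Since `S t` inverts `T_t = id + t V`, whose derivative
`1 + t A` is invertible for small `t`, the chain rule gives `∇φ_t(T_t x) = (1 + t A*)⁻¹ w`.
So `n_t(T_t x)` is the normalization of a curve through `w` with velocity `-A* w`, and its
derivative is `-P(A* n)`, `P` the orthogonal projection onto `n^⊥`. On the other side,
`∇(V · n) = A* n + (Dn)* V`, and the second term vanishes on `Γ` because `V` is parallel to `n`
while `Dn` takes values in `n^⊥` (`|n| = 1`); hence `∇_Γ(V · n) = P(A* n)`.
-/

open MeasureTheory RealInnerProductSpace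

noncomputable section

/-- The divergence of a vector field on `ℝ^d`. -/
def divg {d : ℕ} (W : EuclideanSpace ℝ (Fin d) → EuclideanSpace ℝ (Fin d))
    (x : EuclideanSpace ℝ (Fin d)) : ℝ :=
  ∑ i, fderiv ℝ W x (EuclideanSpace.single i 1) i

/-- The unit normal field `∇φ/|∇φ|` of the level set of `φ`. -/
def nrm {d : ℕ} (φ : EuclideanSpace ℝ (Fin d) → ℝ) (x : EuclideanSpace ℝ (Fin d)) :
    EuclideanSpace ℝ (Fin d) :=
  ‖gradient φ x‖⁻¹ • gradient φ x

/-- The tangential gradient `∇_Γ f = ∇f − (∇f·n)n` relative to a normal field `n`. -/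
def tgrad {d : ℕ} (n : EuclideanSpace ℝ (Fin d) → EuclideanSpace ℝ (Fin d))
    (f : EuclideanSpace ℝ (Fin d) → ℝ) (x : EuclideanSpace ℝ (Fin d)) :
    EuclideanSpace ℝ (Fin d) :=
  gradient f x - ⟪gradient f x, n x⟫ • n x

/-- The tangential divergence `div_Γ W = div W − (DW n)·n` relative to a normal field `n`. -/
def tdiv {d : ℕ} (n W : EuclideanSpace ℝ (Fin d) → EuclideanSpace ℝ (Fin d))
    (x : EuclideanSpace ℝ (Fin d)) : ℝ :=
  divg W x - ⟪fderiv ℝ W x (n x), n x⟫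

/-- The additive curvature `K = div_Γ n`. -/
def addK {d : ℕ} (n : EuclideanSpace ℝ (Fin d) → EuclideanSpace ℝ (Fin d))
    (x : EuclideanSpace ℝ (Fin d)) : ℝ :=
  tdiv n n x

open Filter Topology ContinuousLinearMap

section InnerProductSpace

variable {E F : Type*} [NormedAddCommGroup E] [InnerProductSpace ℝ E]
  [NormedAddCommGroup F] [InnerProductSpace ℝ F]

theorem HasDerivAt.norm_of_ne_zero {g : ℝ → E} {g' : E} {t₀ : ℝ} (hg : HasDerivAt g g' t₀)
    (h0 : g t₀ ≠ 0) : HasDerivAt (fun t => ‖g t‖) (⟪g t₀, g'⟫ / ‖g t₀‖) t₀ := by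
  have hsq : ‖g t₀‖ ^ 2 ≠ 0 := pow_ne_zero 2 (norm_ne_zero_iff.2 h0)
  have := hg.norm_sq.sqrt hsq
  simp only [Real.sqrt_sq (norm_nonneg _)] at this
  convert this using 1
  field_simp

theorem HasDerivAt.norm_inv_smul {g : ℝ → E} {g' : E} {t₀ : ℝ} (hg : HasDerivAt g g' t₀)
    (h0 : g t₀ ≠ 0) :
    HasDerivAt (fun t => ‖g t‖⁻¹ • g t)
      (‖g t₀‖⁻¹ • (g' - ⟪‖g t₀‖⁻¹ • g t₀, g'⟫ • (‖g t₀‖⁻¹ • g t₀))) t₀ := by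
  have hn : ‖g t₀‖ ≠ 0 := norm_ne_zero_iff.2 h0
  refine (((hg.norm_of_ne_zero h0).inv hn).smul hg).congr_deriv ?_
  simp only [Pi.inv_apply, real_inner_smul_left, smul_sub, smul_smul]
  match_scalars <;> field_simp

theorem HasFDerivAt.inner_apply_eq_zero_of_eventually_norm_eq_one {n : E → F} {n' : E →L[ℝ] F}
    {x : E} (hn : HasFDerivAt n n' x) (h1 : ∀ᶠ y in 𝓝 x, ‖n y‖ = 1) (z : E) :
    ⟪n x, n' z⟫ = 0 := by
  have hconst : HasFDerivAt (fun y => ⟪n y, n y⟫) (0 : E →L[ℝ] ℝ) x :=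
    (hasFDerivAt_const (1 : ℝ) x).congr_of_eventuallyEq <| by
      filter_upwards [h1] with y hy
      rw [real_inner_self_eq_norm_sq, hy, one_pow]
  have := congrArg (· z) ((hn.inner ℝ hn).unique hconst)
  simp only [comp_apply, zero_apply, fderivInnerCLM_apply, prod_apply,
    real_inner_comm (n x) (n' z)] at this
  linarith

end InnerProductSpace

section PerturbationOfIdentity

variable {E : Type*} [NormedAddCommGroup E] [NormedSpace ℝ E] [CompleteSpace E]

theorem hasDerivAt_ringInverse_one_add_smul_apply (B : E →L[ℝ] E) (w : E) :
    HasDerivAt (fun t : ℝ => Ring.inverse (1 + t • B) w) (-(B w)) 0 := by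
  have hline : HasDerivAt (fun t : ℝ => 1 + t • B) B 0 := by
    simpa using ((hasDerivAt_id (0 : ℝ)).smul_const B).const_add 1
  have hinv := (hasFDerivAt_ringInverse (𝕜 := ℝ) (1 : (E →L[ℝ] E)ˣ)).comp_hasDerivAt_of_eq 0
    hline (by simp)
  simpa using hinv.clm_apply (hasDerivAt_const 0 w)

theorem HasFDerivAt.of_inverse_id_add_smul {V : E → E} {K : NNReal} (hK : LipschitzWith K V)
    {A : E →L[ℝ] E} {x : E} (hA : HasFDerivAt V A x) {t : ℝ} (ht : ‖t‖₊ * K < 1) {S : E → E}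
    (hl : Function.LeftInverse S (fun y => y + t • V y))
    (hr : Function.RightInverse S (fun y => y + t • V y)) :
    HasFDerivAt S (Ring.inverse (1 + t • A)) (x + t • V x) := by
  have hS : Continuous S :=
    ((AntilipschitzWith.id.add_lipschitzWith ((lipschitzWith_smul t).comp hK)
      (by simpa using ht)).to_rightInverse hr).continuous
  have hsmall : ‖-(t • A)‖ < 1 := by
    rw [norm_neg, norm_smul]
    calc ‖t‖ * ‖A‖ ≤ ‖t‖ * K := by gcongr; exact hA.fderiv ▸ norm_fderiv_le_of_lipschitz ℝ hK
      _ < 1 := by exact_mod_cast ht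
  set u := Units.oneSub (-(t • A)) hsmall
  have hu : (u : E →L[ℝ] E) = 1 + t • A := by simp [u, Units.val_oneSub]
  have hT : HasFDerivAt (fun y => y + t • V y)
      ((ContinuousLinearEquiv.ofUnit u : E ≃L[ℝ] E) : E →L[ℝ] E) (S (x + t • V x)) := by
    rw [hl x]
    exact ((hasFDerivAt_id x).add (hA.const_smul t)).congr_fderiv hu.symm
  have := HasFDerivAt.of_local_left_inverse hS.continuousAt hT (Eventually.of_forall hr)
  rwa [← hu, Ring.inverse_unit]

end PerturbationOfIdentity

section CompleteInnerProductSpace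

variable {E F : Type*} [NormedAddCommGroup E] [InnerProductSpace ℝ E] [CompleteSpace E]
  [NormedAddCommGroup F] [InnerProductSpace ℝ F] [CompleteSpace F]

theorem HasGradientAt.comp_hasFDerivAt {φ : F → ℝ} {w : F} {f : E → F} {L : E →L[ℝ] F} {a : E}
    (hφ : HasGradientAt φ w (f a)) (hf : HasFDerivAt f L a) :
    HasGradientAt (φ ∘ f) (adjoint L w) a := by
  rw [hasGradientAt_iff_hasFDerivAt]
  refine (hφ.hasFDerivAt.comp a hf).congr_fderiv ?_
  ext z
  exact (adjoint_inner_left L z w).symm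

theorem ContDiff.gradient {n : WithTop ℕ∞} {φ : F → ℝ} (hφ : ContDiff ℝ (n + 1) φ) :
    ContDiff ℝ n (gradient φ) :=
  (InnerProductSpace.toDual ℝ F).symm.contDiff.comp (hφ.fderiv_right le_rfl)

/-- Where `V` is parallel to the unit field `n`, the derivative of `n` drops out of the gradient
of `V · n`, being orthogonal to `n`. -/
theorem hasGradientAt_inner_of_eq_smul {V : E → E} {n : E → E} {A n' : E →L[ℝ] E} {x : E} {c : ℝ}
    (hV : HasFDerivAt V A x) (hn : HasFDerivAt n n' x) (h1 : ∀ᶠ y in 𝓝 x, ‖n y‖ = 1)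
    (hVn : V x = c • n x) :
    HasGradientAt (fun y => ⟪V y, n y⟫) (adjoint A (n x)) x := by
  rw [hasGradientAt_iff_hasFDerivAt]
  refine (hV.inner ℝ hn).congr_fderiv ?_
  ext z
  simp only [comp_apply, fderivInnerCLM_apply, prod_apply, InnerProductSpace.toDual_apply_apply,
    hVn, real_inner_smul_left, hn.inner_apply_eq_zero_of_eventually_norm_eq_one h1 z,
    adjoint_inner_left, real_inner_comm (A z)]
  ring

theorem adjoint_ringInverse_one_add_smul (A : E →L[ℝ] E) (t : ℝ) :
    adjoint (Ring.inverse (1 + t • A)) = Ring.inverse (1 + t • adjoint A) := by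
  rw [← star_eq_adjoint, ← Ring.inverse_star, star_add, star_one, star_smul, star_trivial,
    star_eq_adjoint]

theorem hasGradientAt_comp_inverse_id_add_smul {φ : E → ℝ} {w x : E} (hφ : HasGradientAt φ w x)
    {V : E → E} {K : NNReal} (hK : LipschitzWith K V) {A : E →L[ℝ] E} (hA : HasFDerivAt V A x)
    {t : ℝ} (ht : ‖t‖₊ * K < 1) {S : E → E}
    (hl : Function.LeftInverse S (fun y => y + t • V y))
    (hr : Function.RightInverse S (fun y => y + t • V y)) :
    HasGradientAt (φ ∘ S) (Ring.inverse (1 + t • adjoint A) w) (x + t • V x) := by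
  rw [← adjoint_ringInverse_one_add_smul]
  exact HasGradientAt.comp_hasFDerivAt (by rwa [hl x]) (hA.of_inverse_id_add_smul hK ht hl hr)

end CompleteInnerProductSpace

section UnitNormal

variable {d : ℕ} {φ : EuclideanSpace ℝ (Fin d) → ℝ}

theorem norm_nrm {x : EuclideanSpace ℝ (Fin d)} (hx : gradient φ x ≠ 0) : ‖nrm φ x‖ = 1 :=
  norm_smul_inv_norm hx

theorem differentiableAt_nrm (hφ : ContDiff ℝ 2 φ) {x : EuclideanSpace ℝ (Fin d)}
    (hx : gradient φ x ≠ 0) : DifferentiableAt ℝ (nrm φ) x := by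
  have hG : Differentiable ℝ (gradient φ) := (hφ.gradient (n := 1)).differentiable one_ne_zero
  exact ((hG x).norm ℝ hx).inv (norm_ne_zero_iff.2 hx) |>.smul (hG x)

theorem eventually_norm_nrm_eq_one (hφ : ContDiff ℝ 2 φ) {x : EuclideanSpace ℝ (Fin d)}
    (hx : gradient φ x ≠ 0) : ∀ᶠ y in 𝓝 x, ‖nrm φ y‖ = 1 :=
  ((hφ.gradient (n := 1)).continuous.continuousAt.eventually_ne hx).mono fun _ => norm_nrm

end UnitNormal

theorem stmt_5_general {d : ℕ} (φ : EuclideanSpace ℝ (Fin d) → ℝ) (hφ : ContDiff ℝ 2 φ)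
    (hgrad : ∀ x ∈ φ ⁻¹' {0}, gradient φ x ≠ 0)
    (V : EuclideanSpace ℝ (Fin d) → EuclideanSpace ℝ (Fin d))
    (hV : ContDiff ℝ 2 V) (hVc : HasCompactSupport V)
    (hVn : ∀ x ∈ φ ⁻¹' {0}, V x = ⟪V x, nrm φ x⟫ • nrm φ x)
    (δ : ℝ) (hδ : 0 < δ)
    (S : ℝ → EuclideanSpace ℝ (Fin d) → EuclideanSpace ℝ (Fin d))
    (hS : ∀ t ∈ Set.Ioo (-δ) δ,
      Function.LeftInverse (S t) (fun x => x + t • V x)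
        ∧ Function.RightInverse (S t) (fun x => x + t • V x))
    (x : EuclideanSpace ℝ (Fin d)) (hx : x ∈ φ ⁻¹' {0}) :
    HasDerivAt (fun t => nrm (φ ∘ S t) (x + t • V x))
      (-(tgrad (nrm φ) (fun y => ⟪V y, nrm φ y⟫) x)) 0 := by
  obtain ⟨K, hK⟩ := hV.lipschitzWith_of_hasCompactSupport hVc two_ne_zero
  set A := fderiv ℝ V x
  set w := gradient φ x
  have hw : w ≠ 0 := hgrad x hx
  have hA : HasFDerivAt V A x := (hV.differentiable two_ne_zero x).hasFDerivAt
  have hφx : HasGradientAt φ w x := (hφ.differentiable two_ne_zero x).hasGradientAt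
  have hsmall : ∀ᶠ t in 𝓝 (0 : ℝ), ‖t‖₊ * K < 1 ∧ t ∈ Set.Ioo (-δ) δ :=
    (((continuous_nnnorm.mul continuous_const).tendsto' 0 0 (by simp)).eventually
      (gt_mem_nhds zero_lt_one)).and (Ioo_mem_nhds (neg_neg_of_pos hδ) hδ)
  have htransport : (fun t => nrm (φ ∘ S t) (x + t • V x)) =ᶠ[𝓝 0]
      fun t => ‖Ring.inverse (1 + t • adjoint A) w‖⁻¹ • Ring.inverse (1 + t • adjoint A) w := by
    filter_upwards [hsmall] with t ⟨htK, htδ⟩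
    rw [nrm, (hasGradientAt_comp_inverse_id_add_smul hφx hK hA htK (hS t htδ).1
      (hS t htδ).2).gradient]
  have hgradVn : gradient (fun y => ⟪V y, nrm φ y⟫) x = adjoint A (nrm φ x) :=
    (hasGradientAt_inner_of_eq_smul hA (differentiableAt_nrm hφ hw).hasFDerivAt
      (eventually_norm_nrm_eq_one hφ hw) (hVn x hx)).gradient
  refine (((hasDerivAt_ringInverse_one_add_smul_apply (adjoint A) w).norm_inv_smul
    (by simpa using hw)).congr_of_eventuallyEq htransport).congr_deriv ?_
  rw [tgrad, hgradVn, show nrm φ x = ‖w‖⁻¹ • w from rfl]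
  simp only [zero_smul, add_zero, Ring.inverse_one, one_apply_eq_self, map_smul,
    inner_neg_right, real_inner_smul_left, real_inner_smul_right, real_inner_comm w]
  module

/-- material derivative of the unit normal. Let `Γ = φ⁻¹(0)` be a compact
`C²` hypersurface with unit normal `n = ∇φ/|∇φ|`, `V ∈ C_c²` with `V = (V·n)n` on `Γ`,
`T_t(x) = x + tV(x)` with inverse family `S t`, and `n_t = ∇φ_t/|∇φ_t|` with `φ_t = φ ∘ S t`
the unit normal of `Γ_t = T_t(Γ)`. Then for `x ∈ Γ`,
`d/dt n_t(T_t(x))|_{t=0} = −∇_Γ(V·n)(x)`. -/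
theorem stmt_5 {d : ℕ} (φ : EuclideanSpace ℝ (Fin d) → ℝ) (hφ : ContDiff ℝ 2 φ)
    (hcpt : IsCompact (φ ⁻¹' {0}))
    (hgrad : ∀ x ∈ φ ⁻¹' {0}, gradient φ x ≠ 0)
    (V : EuclideanSpace ℝ (Fin d) → EuclideanSpace ℝ (Fin d))
    (hV : ContDiff ℝ 2 V) (hVc : HasCompactSupport V)
    (hVn : ∀ x ∈ φ ⁻¹' {0}, V x = ⟪V x, nrm φ x⟫ • nrm φ x)
    (δ : ℝ) (hδ : 0 < δ)
    (S : ℝ → EuclideanSpace ℝ (Fin d) → EuclideanSpace ℝ (Fin d))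
    (hS : ∀ t ∈ Set.Ioo (-δ) δ,
      Function.LeftInverse (S t) (fun x => x + t • V x)
        ∧ Function.RightInverse (S t) (fun x => x + t • V x))
    (x : EuclideanSpace ℝ (Fin d)) (hx : x ∈ φ ⁻¹' {0}) :
    HasDerivAt (fun t => nrm (φ ∘ S t) (x + t • V x))
      (-(tgrad (nrm φ) (fun y => ⟪V y, nrm φ y⟫) x)) 0 :=
  stmt_5_general φ hφ hgrad V hV hVc hVn δ hδ S hS x hx
end
end

section
/- Local shape derivative under a Dirichlet boundary condition: let Γ ⊂ ℝ^d be a hypersurface with unit normal n, V ∈ C_c¹(ℝ^d;ℝ^d), T_t(x) = x + tV(x), let w : (−δ,δ)×ℝ^d → ℝ be C¹ and w_D : ℝ^d → ℝ be C¹ (independent of t), and suppose w(t, T_t(x)) = w_D(T_t(x)) for all x ∈ Γ and all small t. Then the local shape derivative w' := ∂_t w(0,·) satisfies w'(x) = ∇(w_D − w(0,·))(x)·V(x) for all x ∈ Γ; in particular, if V = (V·n)n on Γ, then w' = (V·n) ∂(w_D − w(0,·))/∂n on Γ. -/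
open MeasureTheory RealInnerProductSpace Filter Topology

noncomputable section

/-!
Differentiating the boundary condition `w(t, x + tV(x)) = w_D(x + tV(x))` at `t = 0` by the chain
rule gives `∂_t w(0,x) + D_x w(0,x) V(x) = D w_D(x) V(x)`, which is the first claim. On a purely
normal field `V = (V·n) n` the directional derivative along `V` is `(V·n)` times the normal one.
-/

section Slices

variable {E F : Type*} [NormedAddCommGroup E] [NormedSpace ℝ E]
  [NormedAddCommGroup F] [NormedSpace ℝ F]
  {w : ℝ → E → F} {L : ℝ × E →L[ℝ] F} {t : ℝ} {x : E}

theorem hasDerivAt_add_smul (x v : E) (t : ℝ) : HasDerivAt (fun s : ℝ => x + s • v) v t := by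
  simpa using ((hasDerivAt_id t).smul_const v).const_add x

theorem HasFDerivAt.hasDerivAt_comp_add_smul {g : E → F} {g' : E →L[ℝ] F} {v : E}
    (hg : HasFDerivAt g g' (x + t • v)) : HasDerivAt (fun s => g (x + s • v)) (g' v) t :=
  hg.comp_hasDerivAt (f := fun s => x + s • v) t (hasDerivAt_add_smul x v t)

theorem HasFDerivAt.hasDerivAt_time_slice
    (hw : HasFDerivAt (fun q : ℝ × E => w q.1 q.2) L (t, x)) :
    HasDerivAt (fun s => w s x) (L (1, 0)) t :=
  hw.comp_hasDerivAt (f := fun s => (s, x)) t ((hasDerivAt_id t).prodMk (hasDerivAt_const t x))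

theorem HasFDerivAt.hasFDerivAt_space_slice
    (hw : HasFDerivAt (fun q : ℝ × E => w q.1 q.2) L (t, x)) :
    HasFDerivAt (w t) (L.comp (.inr ℝ ℝ E)) x :=
  hw.comp x (hasFDerivAt_prodMk_right t x)

theorem HasFDerivAt.hasDerivAt_along_line (v : E)
    (hw : HasFDerivAt (fun q : ℝ × E => w q.1 q.2) L (t, x + t • v)) :
    HasDerivAt (fun s => w s (x + s • v)) (L (1, v)) t :=
  hw.comp_hasDerivAt (f := fun s => (s, x + s • v)) t
    ((hasDerivAt_id t).prodMk (hasDerivAt_add_smul x v t))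

theorem deriv_time_slice_eq_of_eventuallyEq_along_line {g : E → F} {v : E}
    (hw : DifferentiableAt ℝ (fun q : ℝ × E => w q.1 q.2) (0, x))
    (hg : DifferentiableAt ℝ g x)
    (hwg : (fun s => w s (x + s • v)) =ᶠ[𝓝 0] fun s => g (x + s • v)) :
    deriv (fun s => w s x) 0 = fderiv ℝ (fun y => g y - w 0 y) x v := by
  set L := fderiv ℝ (fun q : ℝ × E => w q.1 q.2) (0, x)
  have hL : HasFDerivAt (fun q : ℝ × E => w q.1 q.2) L (0, x) := hw.hasFDerivAt
  have hg_line : HasDerivAt (fun s => g (x + s • v)) (fderiv ℝ g x v) (0 : ℝ) :=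
    HasFDerivAt.hasDerivAt_comp_add_smul (by simpa using hg.hasFDerivAt)
  have hw_line : HasDerivAt (fun s => w s (x + s • v)) (L (1, v)) (0 : ℝ) :=
    HasFDerivAt.hasDerivAt_along_line v (by simpa using hL)
  have hLv : L (1, v) = fderiv ℝ g x v :=
    hw_line.unique (hg_line.congr_of_eventuallyEq hwg)
  rw [hL.hasDerivAt_time_slice.deriv,
    (hg.hasFDerivAt.fun_sub hL.hasFDerivAt_space_slice).fderiv]
  have hsplit : L (1, 0) = L (1, v) - L (0, v) := by
    rw [← map_sub, Prod.mk_sub_mk, sub_zero, sub_self]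
  rw [hsplit, hLv]
  rfl

end Slices

theorem stmt_6_general {d : ℕ} (Γ : Set (EuclideanSpace ℝ (Fin d)))
    (n : EuclideanSpace ℝ (Fin d) → EuclideanSpace ℝ (Fin d))
    (V : EuclideanSpace ℝ (Fin d) → EuclideanSpace ℝ (Fin d))
    (δ : ℝ) (hδ : 0 < δ)
    (w : ℝ → EuclideanSpace ℝ (Fin d) → ℝ)
    (hw : ContDiffOn ℝ 1 (fun q : ℝ × EuclideanSpace ℝ (Fin d) => w q.1 q.2)
      (Set.Ioo (-δ) δ ×ˢ Set.univ))
    (wD : EuclideanSpace ℝ (Fin d) → ℝ) (hwD : ContDiff ℝ 1 wD)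
    (hbc : ∀ x ∈ Γ, ∀ t ∈ Set.Ioo (-δ) δ, w t (x + t • V x) = wD (x + t • V x)) :
    (∀ x ∈ Γ, deriv (fun t => w t x) 0
        = ⟪gradient (fun y => wD y - w 0 y) x, V x⟫) ∧
    ((∀ x ∈ Γ, V x = ⟪V x, n x⟫ • n x) →
      ∀ x ∈ Γ, deriv (fun t => w t x) 0
        = ⟪V x, n x⟫ * ⟪gradient (fun y => wD y - w 0 y) x, n x⟫) := by
  have hδ_nhds : Set.Ioo (-δ) δ ∈ 𝓝 (0 : ℝ) := Ioo_mem_nhds (by linarith) hδ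
  have hgrad : ∀ x ∈ Γ, deriv (fun t => w t x) 0
      = ⟪gradient (fun y => wD y - w 0 y) x, V x⟫ := by
    intro x hx
    have hw_diff : DifferentiableAt ℝ (fun q : ℝ × EuclideanSpace ℝ (Fin d) => w q.1 q.2) (0, x) :=
      (hw.contDiffAt (prod_mem_nhds hδ_nhds univ_mem)).differentiableAt one_ne_zero
    rw [inner_gradient_left]
    exact deriv_time_slice_eq_of_eventuallyEq_along_line hw_diff
      (hwD.differentiable one_ne_zero x) (eventually_of_mem hδ_nhds (hbc x hx))
  refine ⟨hgrad, fun hVn x hx => ?_⟩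
  conv_lhs => rw [hgrad x hx, hVn x hx]
  exact real_inner_smul_right _ _ _

/-- local shape derivative under a Dirichlet boundary condition.
Let `Γ ⊂ ℝ^d` be a hypersurface with unit normal `n`, `V ∈ C_c¹`, `T_t(x) = x + tV(x)`,
`w` a `C¹` family, `w_D` a `C¹` function independent of `t`, with `w(t,·) = w_D` on `T_t(Γ)`
for small `t`. Then the local shape derivative `w' = ∂_t w(0,·)` satisfies
`w' = ∇(w_D − w(0,·))·V` on `Γ`; in particular, if `V = (V·n)n` on `Γ`, then
`w' = (V·n) ∂(w_D − w(0,·))/∂n` on `Γ`. -/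
theorem stmt_6 {d : ℕ} (Γ : Set (EuclideanSpace ℝ (Fin d)))
    (n : EuclideanSpace ℝ (Fin d) → EuclideanSpace ℝ (Fin d))
    (hn : ∀ x ∈ Γ, ‖n x‖ = 1)
    (V : EuclideanSpace ℝ (Fin d) → EuclideanSpace ℝ (Fin d))
    (hV : ContDiff ℝ 1 V) (hVc : HasCompactSupport V)
    (δ : ℝ) (hδ : 0 < δ)
    (w : ℝ → EuclideanSpace ℝ (Fin d) → ℝ)
    (hw : ContDiffOn ℝ 1 (fun q : ℝ × EuclideanSpace ℝ (Fin d) => w q.1 q.2)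
      (Set.Ioo (-δ) δ ×ˢ Set.univ))
    (wD : EuclideanSpace ℝ (Fin d) → ℝ) (hwD : ContDiff ℝ 1 wD)
    (hbc : ∀ x ∈ Γ, ∀ t ∈ Set.Ioo (-δ) δ, w t (x + t • V x) = wD (x + t • V x)) :
    (∀ x ∈ Γ, deriv (fun t => w t x) 0
        = ⟪gradient (fun y => wD y - w 0 y) x, V x⟫) ∧
    ((∀ x ∈ Γ, V x = ⟪V x, n x⟫ • n x) →
      ∀ x ∈ Γ, deriv (fun t => w t x) 0
        = ⟪V x, n x⟫ * ⟪gradient (fun y => wD y - w 0 y) x, n x⟫) :=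
  stmt_6_general Γ n V δ hδ w hw wD hwD hbc

end
end
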